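/- arXiv:2605.13020 — 3 statements merged into one kernel-verified Lean document; each statement's English description precedes it below -/
import Mathlib

section
/- Let A and B be rings with unity and let φ: A → B be a surjective ring homomorphism whose kernel is the left ideal Aπ generated by an element π ∈ A. If I is a left ideal of A such that φ(I) is a finitely generated left ideal of B, then there exist x_1, x_2, …, x_n ∈ I such that I = A x_1 + A x_2 + … + A x_n + (I :_A π)π, where (I :_A π) = {a ∈ A : aπ ∈ I}. -/
/-- Let `A` and `B` be rings with unity and `φ : A → B` a surjective ring
homomorphism whose kernel is the left ideal `Aπ` generated by `π ∈ A`.  If `I` is a left ideal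
of `A` such that `φ(I)` is a finitely generated left ideal of `B`, then there are
`x₁, …, xₙ ∈ I` with `I = A x₁ + ⋯ + A xₙ + (I :_A π) π`, where
`(I :_A π) = {a ∈ A : a π ∈ I}`. -/
theorem statement0 {A B : Type*} [Ring A] [Ring B] (φ : A →+* B)
    (hφ : Function.Surjective φ) (π : A)
    (hker : RingHom.ker φ = Ideal.span {π})
    (I : Ideal A) (hFG : (I.map φ).FG) :
    ∃ (n : ℕ) (x : Fin n → A), (∀ i, x i ∈ I) ∧
      I = (⨆ i, Submodule.span A {x i}) ⊔
        Submodule.map (LinearMap.toSpanSingleton A A π)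
          (Submodule.comap (LinearMap.toSpanSingleton A A π) I) := by
  obtain ⟨S, hS⟩ := hFG
  set n := S.card with hn
  obtain ⟨e⟩ : Nonempty (Fin n ≃ {y // y ∈ S}) := ⟨S.equivFin.symm⟩
  -- each generator lifts to an element of I
  have hmem : ∀ i : Fin n, (e i : B) ∈ I.map φ := fun i => by
    rw [← hS]; exact Ideal.subset_span (e i).2
  choose x hxI hx using fun i : Fin n =>
    (Ideal.mem_map_iff_of_surjective φ hφ).1 (hmem i)
  refine ⟨n, x, hxI, le_antisymm ?_ ?_⟩
  · intro a ha
    -- φ a is a B-combination of the generators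
    have h1 : φ a ∈ Submodule.span B (Set.range fun i => φ (x i)) := by
      have : Set.range (fun i => φ (x i)) = (S : Set B) := by
        ext y
        constructor
        · rintro ⟨i, rfl⟩
          show φ (x i) ∈ (S : Set B)
          rw [hx i]; exact (e i).2
        · intro hy
          refine ⟨e.symm ⟨y, hy⟩, ?_⟩
          show φ (x (e.symm ⟨y, hy⟩)) = y
          rw [hx, e.apply_symm_apply]
      rw [this]
      show φ a ∈ Ideal.span (S : Set B)
      rw [hS]
      exact Ideal.mem_map_of_mem φ ha
    rw [Submodule.mem_span_range_iff_exists_fun] at h1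
    obtain ⟨c, hc⟩ := h1
    choose d hd using fun i => hφ (c i)
    have hker' : a - ∑ i, d i * x i ∈ RingHom.ker φ := by
      simp only [RingHom.mem_ker, map_sub, map_sum, map_mul, hd, sub_eq_zero]
      rw [← hc]
      simp [smul_eq_mul]
    rw [hker, Ideal.span, Submodule.mem_span_singleton] at hker'
    obtain ⟨r, hr⟩ := hker'
    have hsum : (∑ i, d i * x i) ∈ (⨆ i, Submodule.span A {x i} : Submodule A A) := by
      refine Submodule.sum_mem _ fun i _ => ?_
      exact Submodule.mem_iSup_of_mem i (Submodule.smul_mem _ (d i)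
        (Submodule.mem_span_singleton_self (x i)))
    have hrπ : r • π ∈ Submodule.map (LinearMap.toSpanSingleton A A π)
        (Submodule.comap (LinearMap.toSpanSingleton A A π) I) := by
      refine ⟨r, ?_, rfl⟩
      show r • π ∈ I
      rw [hr]
      exact I.sub_mem ha (Submodule.sum_mem _ fun i _ => I.mul_mem_left _ (hxI i))
    have : a = (∑ i, d i * x i) + r • π := by rw [hr]; abel
    rw [this]
    exact Submodule.add_mem _ (Submodule.mem_sup_left hsum) (Submodule.mem_sup_right hrπ)
  · refine sup_le (iSup_le fun i => ?_) ?_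
    · rw [Submodule.span_singleton_le_iff_mem]; exact hxI i
    · exact Submodule.map_comap_le _ _
end

section
/- Every left ideal of R^{t,f}_Θ has one of the following forms: (i) the trivial ideals ⟨0⟩ and ⟨1⟩; (ii) a nontrivial left ideal contained in ⟨u⟩, namely a sum R^{t,f}_Θ(u^{(t−1)−i_1}b_{i_1}(x) − u^{(t−1)−(i_1−1)}g_{i_1}(x)) + … + R^{t,f}_Θ(u^{(t−1)−i_n}b_{i_n}(x) − u^{(t−1)−(i_n−1)}g_{i_n}(x)), where 0 ≤ i_1 < i_2 < … < i_n ≤ t−2, each b_{i_j}(x) ∈ B_{f̄} with deg b_{i_j}(x) ≤ d−1, each g_{i_j}(x) ∈ R^{t,f}_Θ, and whenever u^{(t−1)−i_j}c(x) + u^{(t−1)−(i_j−1)}g(x) lies in the sum of the generators with indices i_k, …, i_n for some j < k, some c(x) ∈ F_{p^m}[x,θ]/⟨f̄(x)⟩ and g(x) ∈ R^{t,f}_Θ, then b_{i_j}(x) right-divides c(x); (iii) a nontrivial left ideal not contained in ⟨u⟩, of the form R^{t,f}_Θ(b(x) + ug(x)) + I, where b(x) ∈ B_{f̄} with deg b(x)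 ≤ d−1, g(x) ∈ R^{t,f}_Θ, and I is a left ideal as in (ii) satisfying the same right-divisibility condition. -/
/-!
Reduction modulo `u` maps `R^{t,f}_Θ` onto `F_{p^m}[x,θ]/⟨f̄⟩`, with kernel generated by the
central nilpotent element `u`. A left ideal `J` is therefore described by its layers
`{ȳ | u^k y ∈ J}`, which are left ideals of `F_{p^m}[x,θ]/⟨f̄⟩`. By the right Euclidean algorithm
these are principal, generated by right divisors of `f̄` of degree `< d`. Lifting one generator
per nonzero layer and multiplying it by the matching power of `u` generates `J` (descending
induction on the power of `u`, using `u^t = 0`). The ideal `J` lies in `⟨u⟩` exactly when the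
layer of `u^0` vanishes; otherwise the lift of its generator is the term `b(x) + u g(x)`.
-/

open Polynomial

namespace SkewPaper

variable (p m t : ℕ) [Fact p.Prime]

/-- The finite field `F_{p^m}`. -/
abbrev Fq : Type := GaloisField p m

/-- The finite chain ring `R^t = F_{p^m}[u]/⟨u^t⟩`. -/
abbrev Rt : Type :=
  Polynomial (Fq p m) ⧸ Ideal.span {(Polynomial.X : Polynomial (Fq p m)) ^ t}

/-- The element `u` of `R^t`. -/
noncomputable def uE : Rt p m t := Ideal.Quotient.mk _ Polynomial.X

/-- The canonical embedding `F_{p^m} → R^t`. -/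
noncomputable def eps : Fq p m →+* Rt p m t :=
  (Ideal.Quotient.mk _).comp Polynomial.C

/-- The automorphism `Θ` of `R^t` extending `θ` with `Θ(u) = u`,
i.e. `Θ(a₀ + a₁u + ⋯ + a_{t-1}u^{t-1}) = θ(a₀) + θ(a₁)u + ⋯ + θ(a_{t-1})u^{t-1}`. -/
noncomputable def Th (theta : Fq p m ≃+* Fq p m) : Rt p m t ≃+* Rt p m t :=
  Ideal.quotientEquiv _ _ (Polynomial.mapEquiv theta) (by
    rw [Ideal.map_span, Set.image_singleton]
    simp [Polynomial.mapEquiv_apply])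

/-- Reduction of `R^t` modulo `u`. -/
noncomputable def rdc (ht : 0 < t) : Rt p m t →+* Fq p m :=
  Ideal.Quotient.lift _ (Polynomial.evalRingHom 0) (by
    intro a ha
    rw [Ideal.mem_span_singleton] at ha
    obtain ⟨b, rfl⟩ := ha
    simp [zero_pow ht.ne'])

/-- `a` right-divides `b`, i.e. `b = h * a` for some `h`. -/
def RDvd {A : Type*} [Mul A] (a b : A) : Prop := ∃ h, b = h * a

/-- The element `Σᵢ ι(cᵢ) X^i` determined by a coefficient family `c`. -/
noncomputable def spoly {R A : Type*} [Semiring R] [Semiring A] (iot : R →+* A) (X : A)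
    (c : ℕ →₀ R) : A :=
  c.sum fun i a => iot a * X ^ i

/-- Lift `Σᵢ ι(ε(cᵢ)) X^i` of a skew polynomial over `F_{p^m}` to the skew polynomial ring
over `R^t` (coefficient-wise, via the embedding `F_{p^m} → R^t`). -/
noncomputable def liftP {A : Type*} [Semiring A] (iot : Rt p m t →+* A) (X : A)
    (c : ℕ →₀ Fq p m) : A :=
  c.sum fun i a => iot (eps p m t a) * X ^ i

/-- `λ = λ₀ + uλ₁ + ⋯ + u^{t-1}λ_{t-1}` as an element of `R^t`. -/
noncomputable def lamOf (lc : ℕ → Fq p m) : Rt p m t :=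
  ∑ i ∈ Finset.range t, eps p m t (lc i) * uE p m t ^ i

/-- The order `|Θ|` of `Θ` in the automorphism group of `R^t`. -/
noncomputable def thOrder (theta : Fq p m ≃+* Fq p m) : ℕ :=
  orderOf (G := RingAut (Rt p m t)) (Th p m t theta)

/-- The order `|θ|` of `θ` in the automorphism group of `F_{p^m}`. -/
noncomputable def thetaOrder (theta : Fq p m ≃+* Fq p m) : ℕ :=
  orderOf (G := RingAut (Fq p m)) theta

/-- The central polynomial `f(x) = Σᵢ fᵢ x^{i·|Θ|}` in the skew polynomial ring. -/
noncomputable def fOf {A : Type*} [Ring A] (theta : Fq p m ≃+* Fq p m)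
    (iot : Rt p m t →+* A) (X : A) (fc : ℕ →₀ Rt p m t) : A :=
  fc.sum fun i a => iot a * X ^ (i * thOrder p m t theta)

/-- The image of `u` in the quotient `R^{t,f}_Θ`. -/
noncomputable def uQ {P Q : Type*} [Semiring P] [Semiring Q] (iot : Rt p m t →+* P)
    (piQ : P →+* Q) : Q :=
  piQ (iot (uE p m t))

/-- The image in `R^{t,f}_Θ` of the lift of a skew polynomial over `F_{p^m}`. -/
noncomputable def lQ {P Q : Type*} [Semiring P] [Semiring Q] (iot : Rt p m t →+* P) (X : P)
    (piQ : P →+* Q) (c : ℕ →₀ Fq p m) : Q :=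
  piQ (liftP p m t iot X c)

/-- The class in `F_{p^m}[x,θ]/⟨f̄⟩` of the skew polynomial with coefficients `c`. -/
noncomputable def lQf {Pf Qf : Type*} [Semiring Pf] [Semiring Qf] (iotf : Fq p m →+* Pf)
    (Xf : Pf) (pif : Pf →+* Qf) (c : ℕ →₀ Fq p m) : Qf :=
  pif (spoly iotf Xf c)

/-- `b(x)` right-divides `c(x)` in the quotient `F_{p^m}[x,θ]/⟨f̄⟩`. -/
def RDvdC {Pf Qf : Type*} [Semiring Pf] [Semiring Qf] (iotf : Fq p m →+* Pf) (Xf : Pf)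
    (pif : Pf →+* Qf) (b c : ℕ →₀ Fq p m) : Prop :=
  ∃ h : Qf, lQf p m iotf Xf pif c = h * lQf p m iotf Xf pif b

/-- Membership in `B_w`: representative of degree `≤ D - 1` which right-divides `w`. -/
def InB {Pf : Type*} [Semiring Pf] (iotf : Fq p m →+* Pf) (Xf : Pf) (w : Pf) (D : ℕ)
    (c : ℕ →₀ Fq p m) : Prop :=
  (∀ i, D ≤ i → c i = 0) ∧ RDvd (spoly iotf Xf c) w

/-- `deg c < deg d` for coefficient families. -/
def degLt {R : Type*} [Zero R] (c d : ℕ →₀ R) : Prop := c.support.max < d.support.max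

/-- "Type (ii)" left ideals of `R^{t,f}_Θ`: those of the form
`Σⱼ R (u^{(t-1)-i_j} b_{i_j}(x) - u^{(t-1)-(i_j-1)} g_{i_j}(x))` with
`0 ≤ i₁ < ⋯ < i_n ≤ t-2`, `b_{i_j} ∈ B_w` of degree `≤ D - 1`, together with the
right-divisibility side condition. -/
def TypeTwo (p m t : ℕ) [Fact p.Prime] {P Pf Q Qf : Type*} [Ring P] [Ring Pf] [Ring Q] [Ring Qf]
    (iot : Rt p m t →+* P) (Xp : P) (piQ : P →+* Q)
    (iotf : Fq p m →+* Pf) (Xf : Pf) (pif : Pf →+* Qf)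
    (w : Pf) (D : ℕ) (J : Ideal Q) : Prop :=
  ∃ (n : ℕ) (idx : Fin n → ℕ) (bcs : Fin n → (ℕ →₀ Fq p m)) (gs : Fin n → Q),
    StrictMono idx ∧ (∀ j, idx j ≤ t - 2) ∧ (∀ j, InB p m iotf Xf w D (bcs j)) ∧
    J = Submodule.span Q (Set.range fun j : Fin n =>
        uQ p m t iot piQ ^ (t - 1 - idx j) * lQ p m t iot Xp piQ (bcs j)
          - uQ p m t iot piQ ^ (t - idx j) * gs j) ∧
    ∀ (j k : Fin n), j < k → ∀ (cc : ℕ →₀ Fq p m) (g : Q),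
      uQ p m t iot piQ ^ (t - 1 - idx j) * lQ p m t iot Xp piQ cc
          + uQ p m t iot piQ ^ (t - idx j) * g ∈
        Submodule.span Q ((fun l : Fin n =>
          uQ p m t iot piQ ^ (t - 1 - idx l) * lQ p m t iot Xp piQ (bcs l)
            - uQ p m t iot piQ ^ (t - idx l) * gs l) '' {l | k ≤ l}) →
      RDvdC p m iotf Xf pif (bcs j) cc

lemma _root_.Finsupp.exists_forall_le_eq_zero {M : Type*} [Zero M] (c : ℕ →₀ M) :
    ∃ N, ∀ i, N ≤ i → c i = 0 :=
  ⟨c.support.sup id + 1, fun i hi => Finsupp.notMem_support_iff.mp fun hmem => by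
    have := Finset.le_sup (f := id) hmem
    simp only [id] at this
    omega⟩

lemma _root_.Finsupp.apply_eq_zero_of_support_max_lt {M : Type*} [Zero M] {c : ℕ →₀ M} {d i : ℕ}
    (hd : c.support.max = (d : WithBot ℕ)) (hi : d < i) : c i = 0 :=
  Finsupp.notMem_support_iff.mp fun hmem => by
    have hid : (i : WithBot ℕ) ≤ d := hd ▸ Finset.le_max hmem
    have : i ≤ d := by exact_mod_cast hid
    omega

section SkewPolynomial

variable {K A : Type*} [Ring K] [Ring A] (iot : K →+* A) (X : A)

noncomputable def spolyAddHom : (ℕ →₀ K) →+ A where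
  toFun := spoly iot X
  map_zero' := Finsupp.sum_zero_index
  map_add' _ _ := Finsupp.sum_add_index' (by simp) (by simp [add_mul])

lemma spoly_zero : spoly iot X 0 = 0 := map_zero (spolyAddHom iot X)

lemma spoly_sub (c c' : ℕ →₀ K) : spoly iot X (c - c') = spoly iot X c - spoly iot X c' :=
  map_sub (spolyAddHom iot X) c c'

lemma map_spoly {B : Type*} [Ring B] (φ : A →+* B) (c : ℕ →₀ K) :
    φ (spoly iot X c) = spoly (φ.comp iot) (φ X) c := by
  simp [spoly, Finsupp.sum, map_sum]

lemma spoly_mapRange {K' : Type*} [Ring K'] (ψ : K' →+* K) (c : ℕ →₀ K') :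
    spoly iot X (c.mapRange ψ ψ.map_zero) = spoly (iot.comp ψ) X c :=
  Finsupp.sum_mapRange_index (by simp)

lemma commute_spoly {z : A} (hzX : Commute z X) (hz : ∀ a, Commute z (iot a)) (c : ℕ →₀ K) :
    Commute z (spoly iot X c) :=
  Commute.sum_right _ _ _ fun i _ => (hz (c i)).mul_right (hzX.pow_right i)

/-- The coefficients of `iot a * X ^ k * spoly c` when `X * iot b = iot (σ b) * X`. -/
noncomputable def twistShift (σ : K →+* K) (a : K) (k : ℕ) (c : ℕ →₀ K) : ℕ →₀ K :=
  Finsupp.embDomain (addRightEmbedding k) (c.mapRange (fun x => a * σ x) (by simp))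

lemma twistShift_apply_of_le (σ : K →+* K) (a : K) {k j : ℕ} (c : ℕ →₀ K) (h : k ≤ j) :
    twistShift σ a k c j = a * σ (c (j - k)) := by
  obtain ⟨i, rfl⟩ := Nat.exists_eq_add_of_le' h
  rw [twistShift, ← addRightEmbedding_apply, Finsupp.embDomain_apply]
  simp

lemma spoly_twistShift (σ : K ≃+* K) (hX : ∀ a, X * iot a = iot (σ a) * X)
    (a : K) (k : ℕ) (c : ℕ →₀ K) :
    spoly iot X (twistShift (↑(σ ^ k)) a k c) = iot a * X ^ k * spoly iot X c := by
  have hXk : ∀ b, X ^ k * iot b = iot ((σ ^ k) b) * X ^ k := by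
    induction k with
    | zero => simp
    | succ n ih =>
      intro b
      rw [pow_succ, mul_assoc, hX, ← mul_assoc, ih, mul_assoc, ← pow_succ]
      rfl
  rw [twistShift, spoly, Finsupp.sum_embDomain, Finsupp.sum_mapRange_index (by simp), spoly,
    Finsupp.sum, Finsupp.sum, Finset.mul_sum]
  refine Finset.sum_congr rfl fun i _ => ?_
  simp only [addRightEmbedding_apply, RingEquiv.coe_toRingHom, map_mul, pow_add]
  rw [← mul_assoc (iot a * X ^ k), mul_assoc (iot a) (X ^ k), hXk, (Commute.pow_pow_self X i k).eq]
  simp only [mul_assoc]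

end SkewPolynomial

section SkewPolynomialField

variable {K A : Type*} [Field K] [Ring A] (iot : K →+* A) (X : A) (σ : K ≃+* K)
  (hX : ∀ a, X * iot a = iot (σ a) * X)
include hX

lemma exists_sub_monomial_mul_degree_lt {b c : ℕ →₀ K} {M n : ℕ} (hbM : b M ≠ 0)
    (hb : ∀ i, M < i → b i = 0) (hc : ∀ i, n < i → c i = 0) (hMn : M ≤ n) :
    ∃ (a : K) (c' : ℕ →₀ K), spoly iot X c' = spoly iot X c - iot a * X ^ (n - M) * spoly iot X b ∧
      ∀ i, n ≤ i → c' i = 0 := by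
  have hσb : (σ ^ (n - M)) (b M) ≠ 0 := (_root_.map_ne_zero _).mpr hbM
  set a := c n * ((σ ^ (n - M)) (b M))⁻¹
  refine ⟨a, c - twistShift (↑(σ ^ (n - M))) a (n - M) b, by
    rw [spoly_sub, spoly_twistShift iot X σ hX], fun i hi => ?_⟩
  rw [Finsupp.sub_apply, twistShift_apply_of_le _ _ _ (by omega)]
  rcases hi.eq_or_lt with rfl | hlt
  · rw [show n - (n - M) = M by omega]
    simp only [RingEquiv.coe_toRingHom, a, inv_mul_cancel_right₀ hσb, sub_self]
  · simp [hc i hlt, hb (i - (n - M)) (by omega)]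

lemma exists_eq_mul_add_degree_lt {b : ℕ →₀ K} {M : ℕ} (hbM : b M ≠ 0)
    (hb : ∀ i, M < i → b i = 0) (c : ℕ →₀ K) :
    ∃ (q : A) (r : ℕ →₀ K), spoly iot X c = q * spoly iot X b + spoly iot X r ∧
      ∀ i, M ≤ i → r i = 0 := by
  suffices key : ∀ N (c : ℕ →₀ K), (∀ i, N ≤ i → c i = 0) →
      ∃ (q : A) (r : ℕ →₀ K), spoly iot X c = q * spoly iot X b + spoly iot X r ∧
        ∀ i, M ≤ i → r i = 0 by
    obtain ⟨N, hN⟩ := c.exists_forall_le_eq_zero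
    exact key N c hN
  intro N
  induction N with
  | zero => exact fun c hc => ⟨0, c, by simp, fun i _ => hc i i.zero_le⟩
  | succ n ih =>
    intro c hc
    by_cases hnM : n + 1 ≤ M
    · exact ⟨0, c, by simp, fun i hi => hc i (by omega)⟩
    obtain ⟨a, c', hc', hc'n⟩ := exists_sub_monomial_mul_degree_lt iot X σ hX hbM hb
      (fun i hi => hc i hi) (by omega : M ≤ n)
    obtain ⟨q, r, hqr, hr⟩ := ih c' hc'n
    refine ⟨q + iot a * X ^ (n - M), r, ?_, hr⟩
    rw [add_mul, add_right_comm, ← hqr, hc', sub_add_cancel]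

theorem exists_eq_span_singleton_of_ne_bot (hsurj : Function.Surjective (spoly iot X))
    (E : Ideal A) (hE : E ≠ ⊥) :
    ∃ (b : ℕ →₀ K) (M : ℕ), b M ≠ 0 ∧ (∀ i, M < i → b i = 0) ∧ E = Ideal.span {spoly iot X b} ∧
      ∀ c, spoly iot X c ∈ E → (∀ i, M ≤ i → c i = 0) → spoly iot X c = 0 := by
  classical
  have hex : ∃ N, ∃ c : ℕ →₀ K, spoly iot X c ∈ E ∧ spoly iot X c ≠ 0 ∧ ∀ i, N ≤ i → c i = 0 := by
    obtain ⟨e, heE, he0⟩ := Submodule.exists_mem_ne_zero_of_ne_bot hE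
    obtain ⟨c, rfl⟩ := hsurj e
    obtain ⟨N, hN⟩ := c.exists_forall_le_eq_zero
    exact ⟨N, c, heE, he0, hN⟩
  obtain ⟨b, hbE, hb0, hbN⟩ := Nat.find_spec hex
  have hmin : ∀ c, spoly iot X c ∈ E → (∀ i, Nat.find hex - 1 ≤ i → c i = 0) →
      spoly iot X c = 0 := by
    intro c hcE hc
    by_contra hc0
    have hle := Nat.find_min' hex ⟨c, hcE, hc0, hc⟩
    have hzero : c = 0 := Finsupp.ext fun i => hc i (by omega)
    exact hc0 (by rw [hzero, spoly_zero])
  have hbM : b (Nat.find hex - 1) ≠ 0 := fun h => hb0 <| hmin b hbE fun i hi => by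
    rcases hi.eq_or_lt with rfl | hlt
    · exact h
    · exact hbN i (by omega)
  have hdvd : ∀ e ∈ E, ∃ q, q * spoly iot X b = e := by
    intro e heE
    obtain ⟨c, rfl⟩ := hsurj e
    obtain ⟨q, r, hqr, hr⟩ := exists_eq_mul_add_degree_lt iot X σ hX hbM
      (fun i hi => hbN i (by omega)) c
    have hrE : spoly iot X r ∈ E := by
      rw [eq_sub_of_add_eq' hqr.symm]
      exact E.sub_mem heE (E.mul_mem_left q hbE)
    exact ⟨q, by rw [hqr, hmin r hrE hr, add_zero]⟩
  refine ⟨b, Nat.find hex - 1, hbM, fun i hi => hbN i (by omega), ?_, hmin⟩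
  refine le_antisymm (fun e heE => Ideal.mem_span_singleton'.mpr (hdvd e heE)) ?_
  exact (Ideal.span_singleton_le_iff_mem E).mpr hbE

end SkewPolynomialField

section SkewQuotient

variable {K A B : Type*} [Field K] [Ring A] [Ring B] (iot : K →+* A) (X : A) (σ : K ≃+* K)
  (hX : ∀ a, X * iot a = iot (σ a) * X)
include hX

theorem exists_rightDvd_generator_of_ne_bot (hsurj : Function.Surjective (spoly iot X))
    (π : A →+* B) (hπ : Function.Surjective π) {w : A} (hw0 : w ≠ 0) (hwπ : π w = 0)
    {cw : ℕ →₀ K} (hw : w = spoly iot X cw) {d : ℕ} (hcw : ∀ i, d < i → cw i = 0)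
    (D : Ideal B) (hD : D ≠ ⊥) :
    ∃ b : ℕ →₀ K, (∀ i, d ≤ i → b i = 0) ∧ RDvd (spoly iot X b) w ∧
      D = Ideal.span {π (spoly iot X b)} := by
  have hE : D.comap π ≠ ⊥ := fun h => hD <| by
    rw [← Ideal.map_comap_of_surjective π hπ D, h, Ideal.map_bot]
  obtain ⟨b, M, hbM, hb, hEb, hmin⟩ :=
    exists_eq_span_singleton_of_ne_bot iot X σ hX hsurj _ hE
  have hDb : D = Ideal.span {π (spoly iot X b)} := by
    rw [← Ideal.map_comap_of_surjective π hπ D, hEb, Ideal.map_span, Set.image_singleton]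
  have hwE : w ∈ D.comap π := by simp [Ideal.mem_comap, hwπ]
  have hMd : M < d := by
    by_contra! hdM
    obtain ⟨a, c', hc', hc'M⟩ := exists_sub_monomial_mul_degree_lt iot X σ hX hbM
      (c := cw) (n := M) hb (fun i hi => hcw i (by omega)) le_rfl
    have hc'E : spoly iot X c' ∈ D.comap π := by
      rw [hc', ← hw]
      exact Ideal.sub_mem _ hwE (Ideal.mul_mem_left _ _ (hEb ▸ Ideal.mem_span_singleton_self _))
    have hwab : w = iot a * spoly iot X b := by
      rw [← hw, hmin c' hc'E hc'M, Nat.sub_self, pow_zero, mul_one] at hc'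
      exact (sub_eq_zero.mp hc'.symm)
    have ha : a ≠ 0 := fun ha => hw0 (by rw [hwab, ha, map_zero, zero_mul])
    have hπb : π (spoly iot X b) = 0 := by
      rw [← one_mul (spoly iot X b), ← map_one iot, ← inv_mul_cancel₀ ha, iot.map_mul, mul_assoc,
        ← hwab, map_mul, hwπ, mul_zero]
    exact hD (by rw [hDb, hπb, Ideal.span_singleton_eq_bot.mpr rfl])
  obtain ⟨q, hq⟩ := Ideal.mem_span_singleton'.mp (hEb ▸ hwE)
  exact ⟨b, fun i hi => hb i (by omega), ⟨q, hq.symm⟩, hDb⟩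

end SkewQuotient

section Layers

variable {Q B : Type*} [Ring Q] [Ring B] (ρ : Q →+* B) (U : Q)

/-- The left ideal `{ρ y | y * U ^ k ∈ J}`. -/
noncomputable def layer (J : Ideal Q) (k : ℕ) : Ideal B :=
  Ideal.map ρ (Submodule.comap (LinearMap.toSpanSingleton Q Q (U ^ k)) J)

variable {ρ U}

lemma mem_layer_iff (hρ : Function.Surjective ρ) {J : Ideal Q} {k : ℕ} {x : B} :
    x ∈ layer ρ U J k ↔ ∃ y, y * U ^ k ∈ J ∧ ρ y = x := by
  simp [layer, Ideal.mem_map_iff_of_surjective ρ hρ]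

lemma layer_zero_eq_bot_iff (hρ : Function.Surjective ρ) (hρU : ρ U = 0)
    (hker : ∀ q, ρ q = 0 → ∃ z, q = z * U) {J : Ideal Q} :
    layer ρ U J 0 = ⊥ ↔ J ≤ Ideal.span {U} := by
  constructor
  · intro h a ha
    have haL : ρ a ∈ layer ρ U J 0 := (mem_layer_iff hρ).mpr ⟨a, by simpa using ha, rfl⟩
    obtain ⟨z, rfl⟩ := hker a (by simpa [h] using haL)
    exact Ideal.mul_mem_left _ z (Ideal.mem_span_singleton_self U)
  · intro h
    refine (Submodule.eq_bot_iff _).mpr fun x hx => ?_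
    obtain ⟨y, hy, rfl⟩ := (mem_layer_iff hρ).mp hx
    obtain ⟨z, rfl⟩ := Ideal.mem_span_singleton'.mp (h (by simpa using hy))
    rw [map_mul, hρU, mul_zero]

theorem eq_span_of_layer_generators (hρ : Function.Surjective ρ) (hU : ∀ q, Commute U q)
    {t : ℕ} (hUt : U ^ t = 0) (hker : ∀ q, ρ q = 0 → ∃ z, q = z * U) (J : Ideal Q) (W : ℕ → Q)
    (S : Finset ℕ) (hS : ∀ i < t, layer ρ U J (t - 1 - i) ≠ ⊥ → i ∈ S)
    (hWJ : ∀ i ∈ S, W i ∈ J)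
    (hW : ∀ i ∈ S, ∃ y, W i = U ^ (t - 1 - i) * y ∧ layer ρ U J (t - 1 - i) ≤ Ideal.span {ρ y}) :
    J = Submodule.span Q (W '' S) := by
  refine le_antisymm (fun a ha => ?_) (Submodule.span_le.mpr ?_)
  · suffices key : ∀ k ≤ t, ∀ y, y * U ^ (t - k) ∈ J →
        y * U ^ (t - k) ∈ Submodule.span Q (W '' S) by
      simpa using key t le_rfl a (by simpa using ha)
    intro k
    induction k with
    | zero => simp [hUt]
    | succ k ih =>
      intro hk y hy
      have hexp : t - k = t - 1 - k + 1 := by omega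
      rw [show t - (k + 1) = t - 1 - k by omega] at hy ⊢
      have hyL : ρ y ∈ layer ρ U J (t - 1 - k) := (mem_layer_iff hρ).mpr ⟨y, hy, rfl⟩
      by_cases hL : layer ρ U J (t - 1 - k) = ⊥
      · obtain ⟨z, rfl⟩ := hker y (by simpa [hL] using hyL)
        rw [mul_assoc, ← pow_succ', ← hexp] at hy ⊢
        exact ih (by omega) z hy
      · have hkS := hS k (by omega) hL
        obtain ⟨v, hWv, hLv⟩ := hW k hkS
        obtain ⟨η, hη⟩ := Ideal.mem_span_singleton'.mp (hLv hyL)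
        obtain ⟨h, rfl⟩ := hρ η
        obtain ⟨z, hz⟩ := hker (y - h * v) (by rw [map_sub, map_mul, hη, sub_self])
        have hsplit : y * U ^ (t - 1 - k) = h * W k + z * U ^ (t - k) := by
          rw [eq_add_of_sub_eq' hz, add_mul, mul_assoc h, hWv, ((hU v).pow_left _).eq, hexp,
            pow_succ', mul_assoc z]
        have hzJ : z * U ^ (t - k) ∈ J := by
          rw [eq_sub_of_add_eq' hsplit.symm]
          exact J.sub_mem hy (J.mul_mem_left h (hWJ k hkS))
        rw [hsplit]
        exact Submodule.add_mem _ (Submodule.smul_mem _ h (Submodule.subset_span ⟨k, hkS, rfl⟩))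
          (ih (by omega) z hzJ)
  · rintro _ ⟨i, hi, rfl⟩
    exact hWJ i hi

end Layers

section ChainRing

variable {p m t}

lemma rdc_eps (ht : 0 < t) (a : Fq p m) : rdc p m t ht (eps p m t a) = a := by
  simp [rdc, eps]

lemma rdc_uE (ht : 0 < t) : rdc p m t ht (uE p m t) = 0 := by
  simp [rdc, uE]

lemma uE_pow_self : uE p m t ^ t = 0 := by
  rw [uE, ← map_pow, Ideal.Quotient.eq_zero_iff_mem]
  exact Ideal.subset_span rfl

lemma Th_uE (theta : Fq p m ≃+* Fq p m) : Th p m t theta (uE p m t) = uE p m t := by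
  simp [Th, uE]

lemma exists_eq_uE_mul_of_rdc_eq_zero (ht : 0 < t) {r : Rt p m t} (h : rdc p m t ht r = 0) :
    ∃ r', r = uE p m t * r' := by
  obtain ⟨g, rfl⟩ := Ideal.Quotient.mk_surjective r
  obtain ⟨g', rfl⟩ : Polynomial.X ∣ g :=
    Polynomial.X_dvd_iff.mpr (by simpa [rdc, Polynomial.coeff_zero_eq_eval_zero] using h)
  exact ⟨Ideal.Quotient.mk _ g', by rw [uE, ← map_mul]⟩

end ChainRing

section Reduction

variable {p m t} {P Pf : Type*} [Ring P] [Ring Pf] {iot : Rt p m t →+* P} {Xp : P}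
  {iotf : Fq p m →+* Pf} {Xf : Pf} {nu : P →+* Pf}

lemma commute_iot_uE (theta : Fq p m ≃+* Fq p m)
    (hXiot : ∀ r, Xp * iot r = iot (Th p m t theta r) * Xp)
    (hsurj : Function.Surjective (spoly iot Xp)) (x : P) : Commute (iot (uE p m t)) x := by
  obtain ⟨c, rfl⟩ := hsurj x
  refine commute_spoly iot Xp ?_ (fun a => (Commute.all _ a).map iot) c
  exact (by rw [hXiot, Th_uE] : Xp * iot (uE p m t) = iot (uE p m t) * Xp).symm

lemma nu_liftP (ht : 0 < t) (hnu1 : ∀ r, nu (iot r) = iotf (rdc p m t ht r)) (hnu2 : nu Xp = Xf)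
    (c : ℕ →₀ Fq p m) : nu (liftP p m t iot Xp c) = spoly iotf Xf c := by
  have hcomp : nu.comp (iot.comp (eps p m t)) = iotf := RingHom.ext fun a => by simp [hnu1, rdc_eps]
  rw [show liftP p m t iot Xp c = spoly (iot.comp (eps p m t)) Xp c from rfl, map_spoly, hcomp,
    hnu2]

lemma exists_eq_iot_uE_mul_of_nu_eq_zero (ht : 0 < t) (hsurj : Function.Surjective (spoly iot Xp))
    (hinj : Function.Injective (spoly iotf Xf))
    (hnu1 : ∀ r, nu (iot r) = iotf (rdc p m t ht r)) (hnu2 : nu Xp = Xf) {x : P} (hx : nu x = 0) :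
    ∃ z, x = iot (uE p m t) * z := by
  obtain ⟨c, rfl⟩ := hsurj x
  have hcomp : nu.comp iot = iotf.comp (rdc p m t ht) := RingHom.ext hnu1
  have hc : c.mapRange (rdc p m t ht) (map_zero _) = 0 := hinj <| by
    rw [spoly_mapRange, ← hcomp, ← hnu2, ← map_spoly, hx, spoly_zero]
  choose r hr using fun i =>
    exists_eq_uE_mul_of_rdc_eq_zero ht (by simpa using DFunLike.congr_fun hc i)
  refine ⟨∑ i ∈ c.support, iot (r i) * Xp ^ i, ?_⟩
  rw [spoly, Finsupp.sum, Finset.mul_sum]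
  exact Finset.sum_congr rfl fun i _ => by rw [hr i, map_mul, mul_assoc]

variable {Q Qf : Type*} [Ring Q] [Ring Qf] {piQ : P →+* Q} {pif : Pf →+* Qf}

lemma commute_uQ (theta : Fq p m ≃+* Fq p m)
    (hXiot : ∀ r, Xp * iot r = iot (Th p m t theta r) * Xp)
    (hsurj : Function.Surjective (spoly iot Xp)) (hpiQ : Function.Surjective piQ) (q : Q) :
    Commute (uQ p m t iot piQ) q := by
  obtain ⟨x, rfl⟩ := hpiQ q
  exact (commute_iot_uE theta hXiot hsurj x).map piQ

lemma uQ_pow_self : uQ p m t iot piQ ^ t = 0 := by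
  rw [uQ, ← map_pow, ← map_pow, uE_pow_self, map_zero, map_zero]

theorem exists_reduction (theta : Fq p m ≃+* Fq p m) (ht : 0 < t)
    (hXiot : ∀ r, Xp * iot r = iot (Th p m t theta r) * Xp)
    (hsurj : Function.Surjective (spoly iot Xp)) (hbij : Function.Bijective (spoly iotf Xf))
    (hnu1 : ∀ r, nu (iot r) = iotf (rdc p m t ht r)) (hnu2 : nu Xp = Xf)
    (hpiQ : Function.Surjective piQ) (hpif : Function.Surjective pif) {F : P}
    (hkerQ : RingHom.ker piQ = Ideal.span {F}) (hkerf : RingHom.ker pif = Ideal.span {nu F}) :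
    ∃ ρ : Q →+* Qf, Function.Surjective ρ ∧ ρ (uQ p m t iot piQ) = 0 ∧
      (∀ c, ρ (lQ p m t iot Xp piQ c) = lQf p m iotf Xf pif c) ∧
      ∀ q, ρ q = 0 → ∃ z, q = z * uQ p m t iot piQ := by
  have hnuF : nu F ∈ RingHom.ker pif := hkerf ▸ Ideal.mem_span_singleton_self (nu F)
  set ρ := piQ.liftOfSurjective hpiQ ⟨pif.comp nu, by
    rw [hkerQ, Ideal.span_singleton_le_iff_mem]; exact hnuF⟩
  have hρ : ∀ x, ρ (piQ x) = pif (nu x) := piQ.liftOfSurjective_comp_apply hpiQ _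
  have hρl : ∀ c, ρ (lQ p m t iot Xp piQ c) = lQf p m iotf Xf pif c := fun c => by
    rw [lQ, hρ, nu_liftP ht hnu1 hnu2, lQf]
  refine ⟨ρ, fun y => ?_, by rw [uQ, hρ, hnu1, rdc_uE, map_zero, map_zero], hρl, fun q hq => ?_⟩
  · obtain ⟨x, rfl⟩ := hpif y
    obtain ⟨c, rfl⟩ := hbij.2 x
    exact ⟨_, hρl c⟩
  · obtain ⟨x, rfl⟩ := hpiQ q
    have hx : nu x ∈ Ideal.span {nu F} := by rw [← hkerf, RingHom.mem_ker, ← hρ, hq]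
    obtain ⟨h, hh⟩ := Ideal.mem_span_singleton'.mp hx
    obtain ⟨c, rfl⟩ := hbij.2 h
    obtain ⟨z, hz⟩ := exists_eq_iot_uE_mul_of_nu_eq_zero ht hsurj hbij.1 hnu1 hnu2
      (x := x - liftP p m t iot Xp c * F)
      (by rw [map_sub, map_mul, nu_liftP ht hnu1 hnu2, hh, sub_self])
    have hF : piQ F = 0 := by rw [← RingHom.mem_ker, hkerQ]; exact Ideal.mem_span_singleton_self F
    refine ⟨piQ z, ?_⟩
    rw [eq_add_of_sub_eq' hz, map_add, map_mul, hF, mul_zero, zero_add, map_mul,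
      ((commute_iot_uE theta hXiot hsurj z).map piQ).eq]
    rfl

end Reduction

section Classification

variable {p m t} {P Pf Q Qf : Type*} [Ring P] [Ring Pf] [Ring Q] [Ring Qf] {iot : Rt p m t →+* P}
  {Xp : P} {piQ : P →+* Q} {iotf : Fq p m →+* Pf} {Xf : Pf} {pif : Pf →+* Qf} {ρ : Q →+* Qf}

lemma exists_layer_generator (theta : Fq p m ≃+* Fq p m)
    (hXiotf : ∀ a, Xf * iotf a = iotf (theta a) * Xf) (hsurjf : Function.Surjective (spoly iotf Xf))
    (hpif : Function.Surjective pif) {w : Pf} (hw0 : w ≠ 0) (hwπ : pif w = 0)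
    {cw : ℕ →₀ Fq p m} (hw : w = spoly iotf Xf cw) {d : ℕ} (hcw : ∀ i, d < i → cw i = 0)
    (hρ : Function.Surjective ρ) (hρl : ∀ c, ρ (lQ p m t iot Xp piQ c) = lQf p m iotf Xf pif c)
    (hker : ∀ q, ρ q = 0 → ∃ z, q = z * uQ p m t iot piQ)
    (hU : ∀ q, Commute (uQ p m t iot piQ) q) (J : Ideal Q) {i : ℕ} (hi : i < t)
    (hL : layer ρ (uQ p m t iot piQ) J (t - 1 - i) ≠ ⊥) :
    ∃ (b : ℕ →₀ Fq p m) (g : Q), InB p m iotf Xf w d b ∧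
      uQ p m t iot piQ ^ (t - 1 - i) * lQ p m t iot Xp piQ b - uQ p m t iot piQ ^ (t - i) * g ∈ J ∧
      layer ρ (uQ p m t iot piQ) J (t - 1 - i) = Ideal.span {lQf p m iotf Xf pif b} := by
  set U := uQ p m t iot piQ
  obtain ⟨b, hbd, hbw, hLb⟩ :=
    exists_rightDvd_generator_of_ne_bot iotf Xf theta hXiotf hsurjf pif hpif hw0 hwπ hw hcw _ hL
  obtain ⟨y, hyJ, hyb⟩ := (mem_layer_iff hρ).mp (hLb ▸ Ideal.mem_span_singleton_self _)
  obtain ⟨z, hz⟩ := hker (y - lQ p m t iot Xp piQ b) (by rw [map_sub, hρl, hyb]; exact sub_self _)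
  refine ⟨b, -z, ⟨hbd, hbw⟩, ?_, hLb⟩
  convert hyJ using 1
  rw [show t - i = t - 1 - i + 1 by omega, eq_add_of_sub_eq' hz, mul_neg, sub_neg_eq_add, add_mul,
    ← ((hU _).pow_left _).eq, mul_assoc z, ← pow_succ', ← ((hU z).pow_left _).eq]

theorem exists_layer_generators (theta : Fq p m ≃+* Fq p m)
    (hXiotf : ∀ a, Xf * iotf a = iotf (theta a) * Xf) (hsurjf : Function.Surjective (spoly iotf Xf))
    (hpif : Function.Surjective pif) {w : Pf} (hw0 : w ≠ 0) (hwπ : pif w = 0)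
    {cw : ℕ →₀ Fq p m} (hw : w = spoly iotf Xf cw) {d : ℕ} (hcw : ∀ i, d < i → cw i = 0)
    (hρ : Function.Surjective ρ) (hρU : ρ (uQ p m t iot piQ) = 0)
    (hρl : ∀ c, ρ (lQ p m t iot Xp piQ c) = lQf p m iotf Xf pif c)
    (hker : ∀ q, ρ q = 0 → ∃ z, q = z * uQ p m t iot piQ)
    (hU : ∀ q, Commute (uQ p m t iot piQ) q) (J : Ideal Q) :
    ∃ (b : ℕ → ℕ →₀ Fq p m) (g : ℕ → Q) (S : Finset ℕ),
      (∀ i, i ∈ S ↔ i < t ∧ layer ρ (uQ p m t iot piQ) J (t - 1 - i) ≠ ⊥) ∧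
      (∀ i ∈ S, InB p m iotf Xf w d (b i) ∧
        layer ρ (uQ p m t iot piQ) J (t - 1 - i) ≤ Ideal.span {lQf p m iotf Xf pif (b i)}) ∧
      J = Submodule.span Q ((fun i => uQ p m t iot piQ ^ (t - 1 - i) * lQ p m t iot Xp piQ (b i)
        - uQ p m t iot piQ ^ (t - i) * g i) '' S) := by
  set U := uQ p m t iot piQ
  have hgen : ∀ i, ∃ (b : ℕ →₀ Fq p m) (g : Q), i < t → layer ρ U J (t - 1 - i) ≠ ⊥ →
      InB p m iotf Xf w d b ∧ U ^ (t - 1 - i) * lQ p m t iot Xp piQ b - U ^ (t - i) * g ∈ J ∧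
      layer ρ U J (t - 1 - i) = Ideal.span {lQf p m iotf Xf pif b} := fun i => by
    by_cases h : i < t ∧ layer ρ U J (t - 1 - i) ≠ ⊥
    · obtain ⟨b, g, hbg⟩ := exists_layer_generator theta hXiotf hsurjf hpif hw0 hwπ hw hcw hρ hρl
        hker hU J h.1 h.2
      exact ⟨b, g, fun _ _ => hbg⟩
    · exact ⟨0, 0, fun h1 h2 => absurd ⟨h1, h2⟩ h⟩
  choose b g hbg using hgen
  set S := (Finset.range t).filter fun i => layer ρ U J (t - 1 - i) ≠ ⊥
  have hS : ∀ i, i ∈ S ↔ i < t ∧ layer ρ U J (t - 1 - i) ≠ ⊥ := by simp [S]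
  refine ⟨b, g, S, hS, fun i hi => ?_, ?_⟩
  · obtain ⟨hb, -, hL⟩ := hbg i ((hS i).mp hi).1 ((hS i).mp hi).2
    exact ⟨hb, hL.le⟩
  refine eq_span_of_layer_generators hρ hU uQ_pow_self hker J _ S
    (fun i hi hL => (hS i).mpr ⟨hi, hL⟩)
    (fun i hi => (hbg i ((hS i).mp hi).1 ((hS i).mp hi).2).2.1) fun i hi => ?_
  obtain ⟨hit, hL⟩ := (hS i).mp hi
  refine ⟨lQ p m t iot Xp piQ (b i) - U * g i, ?_, ?_⟩
  · rw [mul_sub, ← mul_assoc, ← pow_succ, show t - 1 - i + 1 = t - i by omega]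
  · rw [(hbg i hit hL).2.2, map_sub, map_mul, hρU, zero_mul, sub_zero, hρl]

theorem typeTwo_span_image (ht : 0 < t) (hρ : Function.Surjective ρ)
    (hρU : ρ (uQ p m t iot piQ) = 0) (hρl : ∀ c, ρ (lQ p m t iot Xp piQ c) = lQf p m iotf Xf pif c)
    (hU : ∀ q, Commute (uQ p m t iot piQ) q) {J : Ideal Q} {w : Pf} {d : ℕ}
    (b : ℕ → ℕ →₀ Fq p m) (g : ℕ → Q) (G : Finset ℕ)
    (hG : ∀ i ∈ G, i ≤ t - 2 ∧ InB p m iotf Xf w d (b i) ∧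
      layer ρ (uQ p m t iot piQ) J (t - 1 - i) ≤ Ideal.span {lQf p m iotf Xf pif (b i)})
    (hGJ : Submodule.span Q ((fun i => uQ p m t iot piQ ^ (t - 1 - i) * lQ p m t iot Xp piQ (b i)
        - uQ p m t iot piQ ^ (t - i) * g i) '' G) ≤ J) :
    TypeTwo p m t iot Xp piQ iotf Xf pif w d
      (Submodule.span Q ((fun i => uQ p m t iot piQ ^ (t - 1 - i) * lQ p m t iot Xp piQ (b i)
        - uQ p m t iot piQ ^ (t - i) * g i) '' G)) := by
  set U := uQ p m t iot piQ
  set e := G.orderEmbOfFin rfl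
  have he : ∀ j, e j ∈ G := G.orderEmbOfFin_mem rfl
  refine ⟨G.card, fun j => e j, fun j => b (e j), fun j => g (e j), e.strictMono,
    fun j => (hG _ (he j)).1, fun j => (hG _ (he j)).2.1, ?_, ?_⟩
  · rw [← G.range_orderEmbOfFin rfl, ← Set.range_comp]
    rfl
  intro j k _ c h hmem
  have hcJ : (lQ p m t iot Xp piQ c + U * h) * U ^ (t - 1 - e j) ∈ J := by
    have hexp : t - e j = t - 1 - e j + 1 := by have := (hG _ (he j)).1; omega
    rw [add_mul, ← ((hU _).pow_left _).eq, mul_assoc U h, ← ((hU h).pow_left _).eq, ← mul_assoc,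
      ← pow_succ', ← hexp]
    refine hGJ (Submodule.span_mono ?_ hmem)
    rintro _ ⟨l, -, rfl⟩
    exact ⟨e l, he l, rfl⟩
  have hcL : lQf p m iotf Xf pif c ∈ layer ρ U J (t - 1 - e j) :=
    (mem_layer_iff hρ).mpr ⟨_, hcJ, by rw [map_add, map_mul, hρU, zero_mul, add_zero, hρl]⟩
  obtain ⟨η, hη⟩ := Ideal.mem_span_singleton'.mp ((hG _ (he j)).2.2 hcL)
  exact ⟨η, hη.symm⟩

end Classification

theorem statement3_general (p m t : ℕ) [Fact p.Prime] (ht : 0 < t)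
    (theta : Fq p m ≃+* Fq p m)
    {P : Type*} [Ring P] (iot : Rt p m t →+* P) (Xp : P)
    (hXiot : ∀ r, Xp * iot r = iot (Th p m t theta r) * Xp)
    (hPrep : ∀ g : P, ∃! c : ℕ →₀ Rt p m t, g = spoly iot Xp c)
    {Pf : Type*} [Ring Pf] (iotf : Fq p m →+* Pf) (Xf : Pf)
    (hXiotf : ∀ a, Xf * iotf a = iotf (theta a) * Xf)
    (hPfrep : ∀ g : Pf, ∃! c : ℕ →₀ Fq p m, g = spoly iotf Xf c)
    (fc : ℕ →₀ Rt p m t)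
    (nu : P →+* Pf) (hnu1 : ∀ r, nu (iot r) = iotf (rdc p m t ht r)) (hnu2 : nu Xp = Xf)
    {Q : Type*} [Ring Q] (piQ : P →+* Q) (hpiQ : Function.Surjective piQ)
    (hkerQ : RingHom.ker piQ = Ideal.span {fOf p m t theta iot Xp fc})
    {Qf : Type*} [Ring Qf] (pif : Pf →+* Qf) (hpif : Function.Surjective pif)
    (hkerf : RingHom.ker pif = Ideal.span {nu (fOf p m t theta iot Xp fc)})
    (d : ℕ)
    (hd : ∃ c : ℕ →₀ Fq p m, nu (fOf p m t theta iot Xp fc) = spoly iotf Xf c ∧ c.support.max = (d : WithBot ℕ)) :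
    ∀ J : Ideal Q,
      J = ⊥ ∨ J = ⊤ ∨
      (J ≠ ⊥ ∧ J ≤ Ideal.span {uQ p m t iot piQ} ∧
        TypeTwo p m t iot Xp piQ iotf Xf pif (nu (fOf p m t theta iot Xp fc)) d J) ∨
      (J ≠ ⊤ ∧ ¬J ≤ Ideal.span {uQ p m t iot piQ} ∧
        ∃ (bc : ℕ →₀ Fq p m) (g : Q) (I : Ideal Q),
          InB p m iotf Xf (nu (fOf p m t theta iot Xp fc)) d bc ∧
          TypeTwo p m t iot Xp piQ iotf Xf pif (nu (fOf p m t theta iot Xp fc)) d I ∧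
          J = Submodule.span Q {lQ p m t iot Xp piQ bc + uQ p m t iot piQ * g} ⊔ I) := by
  intro J
  obtain ⟨cw, hw, hdw⟩ := hd
  have hsurj : Function.Surjective (spoly iot Xp) := fun x => (hPrep x).exists.imp fun _ h => h.symm
  have hbij : Function.Bijective (spoly iotf Xf) :=
    (Function.bijective_iff_existsUnique _).mpr fun x => by simpa only [eq_comm] using hPfrep x
  have hw0 : nu (fOf p m t theta iot Xp fc) ≠ 0 := fun h0 => by
    rw [← spoly_zero iotf Xf, hw] at h0
    simp [hbij.1 h0] at hdw
  have hwπ : pif (nu (fOf p m t theta iot Xp fc)) = 0 :=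
    RingHom.mem_ker.mp (hkerf ▸ Ideal.mem_span_singleton_self _)
  have hU := commute_uQ theta hXiot hsurj hpiQ
  obtain ⟨ρ, hρ, hρU, hρl, hker⟩ :=
    exists_reduction theta ht hXiot hsurj hbij hnu1 hnu2 hpiQ hpif hkerQ hkerf
  obtain ⟨b, g, S, hS, hb, hJ⟩ := exists_layer_generators theta hXiotf hbij.2 hpif hw0 hwπ hw
    (fun _ => Finsupp.apply_eq_zero_of_support_max_lt hdw) hρ hρU hρl hker hU J
  have hTT : ∀ G ⊆ S, (∀ i ∈ G, i ≤ t - 2) → TypeTwo p m t iot Xp piQ iotf Xf pif _ d _ :=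
    fun G hGS hG => typeTwo_span_image ht hρ hρU hρl hU b g G
      (fun i hi => ⟨hG i hi, hb i (hGS hi)⟩) (hJ ▸ Submodule.span_mono (Set.image_mono hGS))
  have hlayer0 := layer_zero_eq_bot_iff hρ hρU hker (J := J)
  by_cases hJbot : J = ⊥
  · exact Or.inl hJbot
  by_cases hJtop : J = ⊤
  · exact Or.inr (Or.inl hJtop)
  by_cases hJu : J ≤ Ideal.span {uQ p m t iot piQ}
  · refine Or.inr (Or.inr (Or.inl ⟨hJbot, hJu, hJ ▸ hTT S subset_rfl fun i hi => ?_⟩))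
    obtain ⟨hit, hL⟩ := (hS i).mp hi
    have : i ≠ t - 1 := by
      rintro rfl
      exact hL (by simpa using hlayer0.mpr hJu)
    omega
  have ht1 : t - 1 ∈ S := (hS _).mpr ⟨by omega, by simpa using mt hlayer0.mp hJu⟩
  refine Or.inr (Or.inr (Or.inr ⟨hJtop, hJu, b (t - 1), -g (t - 1), _, (hb _ ht1).1,
    hTT (S.erase (t - 1)) (S.erase_subset _) fun i hi => ?_, ?_⟩))
  · obtain ⟨hne, hiS⟩ := Finset.mem_erase.mp hi
    have := ((hS i).mp hiS).1
    omega
  · rw [hJ, ← Finset.insert_erase ht1, Finset.coe_insert, Set.image_insert_eq,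
      Submodule.span_insert]
    simp [show t - (t - 1) = 1 by omega, sub_eq_add_neg]

/-- Classification of the left ideals of `R^{t,f}_Θ`. -/
theorem statement3 (p m t : ℕ) [Fact p.Prime] (hm : 0 < m) (ht : 0 < t)
    (theta : Fq p m ≃+* Fq p m)
    {P : Type*} [Ring P] (iot : Rt p m t →+* P) (Xp : P)
    (hXiot : ∀ r, Xp * iot r = iot (Th p m t theta r) * Xp)
    (hPrep : ∀ g : P, ∃! c : ℕ →₀ Rt p m t, g = spoly iot Xp c)
    {Pf : Type*} [Ring Pf] (iotf : Fq p m →+* Pf) (Xf : Pf)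
    (hXiotf : ∀ a, Xf * iotf a = iotf (theta a) * Xf)
    (hPfrep : ∀ g : Pf, ∃! c : ℕ →₀ Fq p m, g = spoly iotf Xf c)
    (fc : ℕ →₀ Rt p m t) (hfc : ∀ i, Th p m t theta (fc i) = fc i)
    (nu : P →+* Pf) (hnu1 : ∀ r, nu (iot r) = iotf (rdc p m t ht r)) (hnu2 : nu Xp = Xf)
    {Q : Type*} [Ring Q] (piQ : P →+* Q) (hpiQ : Function.Surjective piQ)
    (hkerQ : RingHom.ker piQ = Ideal.span {fOf p m t theta iot Xp fc})
    {Qf : Type*} [Ring Qf] (pif : Pf →+* Qf) (hpif : Function.Surjective pif)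
    (hkerf : RingHom.ker pif = Ideal.span {nu (fOf p m t theta iot Xp fc)})
    (d : ℕ)
    (hd : ∃ c : ℕ →₀ Fq p m, nu (fOf p m t theta iot Xp fc) = spoly iotf Xf c ∧ c.support.max = (d : WithBot ℕ)) :
    ∀ J : Ideal Q,
      J = ⊥ ∨ J = ⊤ ∨
      (J ≠ ⊥ ∧ J ≤ Ideal.span {uQ p m t iot piQ} ∧
        TypeTwo p m t iot Xp piQ iotf Xf pif (nu (fOf p m t theta iot Xp fc)) d J) ∨
      (J ≠ ⊤ ∧ ¬J ≤ Ideal.span {uQ p m t iot piQ} ∧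
        ∃ (bc : ℕ →₀ Fq p m) (g : Q) (I : Ideal Q),
          InB p m iotf Xf (nu (fOf p m t theta iot Xp fc)) d bc ∧
          TypeTwo p m t iot Xp piQ iotf Xf pif (nu (fOf p m t theta iot Xp fc)) d I ∧
          J = Submodule.span Q {lQ p m t iot Xp piQ bc + uQ p m t iot piQ * g} ⊔ I) :=
  statement3_general p m t ht theta iot Xp hXiot hPrep iotf Xf hXiotf hPfrep fc nu hnu1 hnu2 piQ
    hpiQ hkerQ pif hpif hkerf d hd

end SkewPaper
end

section
/- Let g(x) be a nonzero polynomial in F_{p^m}[x,θ]/⟨x^{p^s} − λ_0⟩. Then g(x) is left invertible if and only if gcd_r(g(x), (λ_{0,0}x − 1)^{p^s}) = 1. -/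
open Polynomial

namespace SkewPaper

variable (p m t : ℕ) [Fact p.Prime]

/-! In `F_{p^m}[x,θ]` every nonzero element has a unit leading coefficient, so right division
with remainder works and every left ideal is principal, generated by an element of least degree.
Hence `1` lies in the left ideal `⟨g, F⟩`, `F = (λ₀₀x - 1)^{p^s}`, iff every common right divisor
of `g` and `F` right-divides `1`. As `θ` fixes `λ₀₀` and the characteristic is `p`,
`F = λ₀₀^{p^s} x^{p^s} - 1 = λ₀⁻¹ (x^{p^s} - λ₀)`, so `F` generates the kernel of the quotient map
and `g` is left invertible modulo it iff `1 ∈ ⟨g, F⟩`. -/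

section SkewPolynomial

variable {K A : Type*} [Semiring K] [Semiring A] {iot : K →+* A} {X : A} {theta : K ≃+* K}

variable (iot X) in
noncomputable def spolyHom : (ℕ →₀ K) →+ A :=
  Finsupp.liftAddHom fun i => (AddMonoidHom.mulRight (X ^ i)).comp iot.toAddMonoidHom

@[simp]
lemma coe_spolyHom : ⇑(spolyHom iot X) = spoly iot X := by
  ext c
  simp [spolyHom, spoly, Finsupp.liftAddHom_apply, Function.comp_def]

lemma pow_mul_map_of_mul_map (hX : ∀ a, X * iot a = iot (theta a) * X) (k : ℕ) (a : K) :
    X ^ k * iot a = iot ((⇑theta)^[k] a) * X ^ k := by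
  induction k generalizing a with
  | zero => simp
  | succ k ih =>
    rw [pow_succ, mul_assoc, hX, ← mul_assoc, ih, ← Function.iterate_succ_apply, mul_assoc,
      ← pow_succ]

lemma map_mul_pow_of_fixed (hX : ∀ a, X * iot a = iot (theta a) * X) {l : K}
    (hl : theta l = l) (j : ℕ) : (iot l * X) ^ j = iot (l ^ j) * X ^ j := by
  induction j with
  | zero => simp
  | succ j ih =>
    rw [pow_succ, ih, mul_assoc, ← mul_assoc (X ^ j), pow_mul_map_of_mul_map hX,
      Function.iterate_fixed hl, pow_succ, map_mul, pow_succ, mul_assoc, mul_assoc]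

variable (theta) in
noncomputable def skewShift (a : K) (k : ℕ) (c : ℕ →₀ K) : ℕ →₀ K :=
  Finsupp.embDomain (addLeftEmbedding k) (c.mapRange (fun b => a * (⇑theta)^[k] b) (by simp))

lemma skewShift_apply_add (a : K) (k : ℕ) (c : ℕ →₀ K) (i : ℕ) :
    skewShift theta a k c (k + i) = a * (⇑theta)^[k] (c i) :=
  (Finsupp.embDomain_apply_self (addLeftEmbedding k) _ i).trans Finsupp.mapRange_apply

lemma support_skewShift_subset (a : K) (k : ℕ) (c : ℕ →₀ K) :
    (skewShift theta a k c).support ⊆ c.support.map (addLeftEmbedding k) := by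
  rw [skewShift, Finsupp.support_embDomain]
  exact Finset.map_subset_map.mpr Finsupp.support_mapRange

lemma spoly_skewShift (hX : ∀ a, X * iot a = iot (theta a) * X) (a : K) (k : ℕ)
    (c : ℕ →₀ K) : spoly iot X (skewShift theta a k c) = iot a * X ^ k * spoly iot X c := by
  rw [spoly, skewShift, Finsupp.sum_embDomain, Finsupp.sum_mapRange_index (by simp), spoly,
    Finsupp.mul_sum]
  refine Finsupp.sum_congr fun i _ => ?_
  rw [addLeftEmbedding_apply, map_mul, pow_add, mul_assoc, mul_assoc, ← mul_assoc (X ^ k),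
    pow_mul_map_of_mul_map hX, mul_assoc]

variable (hbij : Function.Bijective (spoly iot X))

noncomputable def spolyCoeffs : A ≃+ (ℕ →₀ K) :=
  (AddEquiv.ofBijective (spolyHom iot X) (by rwa [coe_spolyHom])).symm

lemma spoly_spolyCoeffs (f : A) : spoly iot X (spolyCoeffs hbij f) = f := by
  rw [← coe_spolyHom]
  exact (AddEquiv.ofBijective (spolyHom iot X) _).apply_symm_apply f

lemma spolyCoeffs_spoly (c : ℕ →₀ K) : spolyCoeffs hbij (spoly iot X c) = c := by
  rw [← coe_spolyHom]
  exact (AddEquiv.ofBijective (spolyHom iot X) _).symm_apply_apply c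

noncomputable def spolyDeg (f : A) : WithBot ℕ := (spolyCoeffs hbij f).support.max

lemma spolyCoeffs_mul (hX : ∀ a, X * iot a = iot (theta a) * X) (a : K) (k : ℕ) (f : A) :
    spolyCoeffs hbij (iot a * X ^ k * f) = skewShift theta a k (spolyCoeffs hbij f) := by
  rw [← spolyCoeffs_spoly hbij (skewShift theta a k _), spoly_skewShift hX, spoly_spolyCoeffs]

end SkewPolynomial

section

variable {K A : Type*} [Semiring K] [Ring A] {iot : K →+* A} {X : A} {theta : K ≃+* K}

lemma map_mul_sub_one_pow_expChar_pow (p s : ℕ) [ExpChar A p]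
    (hX : ∀ a, X * iot a = iot (theta a) * X) {l : K} (hl : theta l = l) :
    (iot l * X - 1) ^ p ^ s = iot (l ^ p ^ s) * X ^ p ^ s - 1 := by
  rw [sub_pow_expChar_pow_of_commute p s (Commute.one_right _), one_pow,
    map_mul_pow_of_fixed hX hl]

end

section SkewPolynomialDivision

variable {K A : Type*} [DivisionRing K] [Ring A] {iot : K →+* A} {X : A} {theta : K ≃+* K}
variable (hbij : Function.Bijective (spoly iot X))

lemma exists_spolyDeg_sub_mul_lt_self (hX : ∀ a, X * iot a = iot (theta a) * X) {e f : A}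
    (he : e ≠ 0) (hle : spolyDeg hbij e ≤ spolyDeg hbij f) :
    ∃ q, spolyDeg hbij (f - q * e) < spolyDeg hbij f := by
  set ce := spolyCoeffs hbij e
  set cf := spolyCoeffs hbij f
  obtain ⟨d, hd⟩ := Finset.max_of_nonempty (s := ce.support)
    (Finsupp.support_nonempty_iff.2 ((AddEquiv.map_ne_zero_iff _).2 he))
  have hed : spolyDeg hbij e = d := hd
  obtain ⟨n, hn⟩ := WithBot.ne_bot_iff_exists.1 (ne_bot_of_le_ne_bot (by simp [hed]) hle)
  have hfn : cf.support.max = n := hn.symm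
  have hdn : d ≤ n := WithBot.coe_le_coe.1 (by rwa [hed, ← hn] at hle)
  set k := n - d
  have hlead : (⇑theta)^[k] (ce d) ≠ 0 :=
    (theta.injective.iterate k).ne_iff' (Function.iterate_fixed (map_zero theta) k) |>.2
      (Finsupp.mem_support_iff.1 (Finset.mem_of_max hd))
  -- `a X^k e` has leading coefficient `a θ^k(c_d)`, which is `cf n` for this `a`.
  refine ⟨iot (cf n * ((⇑theta)^[k] (ce d))⁻¹) * X ^ k, ?_⟩
  rw [← hn, spolyDeg, map_sub, spolyCoeffs_mul hbij hX, Finset.max_eq_sup_coe,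
    Finset.sup_lt_iff (WithBot.bot_lt_coe n)]
  intro j hj
  rw [WithBot.coe_lt_coe]
  have hjn : j ≠ n := by
    rintro rfl
    rw [Finsupp.mem_support_iff, Finsupp.sub_apply, show j = k + d by omega, skewShift_apply_add,
      inv_mul_cancel_right₀ hlead, ← show j = k + d by omega, sub_self] at hj
    exact hj rfl
  have hjle : j ≤ n := by
    rcases Finset.mem_union.1 (Finsupp.support_sub hj) with hj | hj
    · exact Finset.le_max_of_eq hj hfn
    · obtain ⟨i, hi, rfl⟩ := Finset.mem_map.1 (support_skewShift_subset _ _ _ hj)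
      have := Finset.le_max_of_eq hi hd
      simp only [addLeftEmbedding_apply]
      omega
  omega

lemma exists_spolyDeg_sub_mul_lt (hX : ∀ a, X * iot a = iot (theta a) * X) {e : A}
    (he : e ≠ 0) (f : A) : ∃ q, spolyDeg hbij (f - q * e) < spolyDeg hbij e := by
  induction hf : spolyDeg hbij f using WellFoundedLT.induction generalizing f with
  | _ D ih =>
    by_cases hlt : spolyDeg hbij f < spolyDeg hbij e
    · exact ⟨0, by simpa⟩
    · obtain ⟨q₁, hq₁⟩ := exists_spolyDeg_sub_mul_lt_self hbij hX he (not_lt.1 hlt)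
      obtain ⟨q₂, hq₂⟩ := ih _ (hf ▸ hq₁) (f - q₁ * e) rfl
      exact ⟨q₁ + q₂, by rwa [add_mul, ← sub_sub]⟩

theorem isPrincipalIdealRing_of_bijective_spoly (hbij : Function.Bijective (spoly iot X))
    (hX : ∀ a, X * iot a = iot (theta a) * X) : IsPrincipalIdealRing A := by
  refine ⟨fun I => ?_⟩
  by_cases hI : I = ⊥
  · rw [hI]
    infer_instance
  obtain ⟨f, hfI, hf0⟩ := Submodule.exists_mem_ne_zero_of_ne_bot hI
  set e := Function.argminOn (spolyDeg hbij) {g | g ∈ I ∧ g ≠ 0} ⟨f, hfI, hf0⟩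
  obtain ⟨heI, he0⟩ := Function.argminOn_mem (spolyDeg hbij) {g | g ∈ I ∧ g ≠ 0} ⟨f, hfI, hf0⟩
  refine ⟨e, le_antisymm (fun g hg => ?_) ((Submodule.span_singleton_le_iff_mem _ _).2 heI)⟩
  obtain ⟨q, hq⟩ := exists_spolyDeg_sub_mul_lt hbij hX he0 g
  have hr : g - q * e = 0 := by
    by_contra hr
    exact Function.not_lt_argminOn (spolyDeg hbij) {g | g ∈ I ∧ g ≠ 0}
      (a := g - q * e) ⟨I.sub_mem hg (I.mul_mem_left q heI), hr⟩ hq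
  exact Submodule.mem_span_singleton.2 ⟨q, (sub_eq_zero.1 hr).symm⟩

end SkewPolynomialDivision

section LeftIdeal

variable {A : Type*} [Ring A]

lemma rdvd_iff_mem_span_singleton {e x : A} : RDvd e x ↔ x ∈ Ideal.span {e} := by
  simp only [RDvd, Ideal.mem_span_singleton', eq_comm]

lemma one_mem_span_pair_iff [IsPrincipalIdealRing A] {g F : A} :
    (1 : A) ∈ Ideal.span {g, F} ↔ ∀ e, RDvd e g → RDvd e F → RDvd e 1 := by
  constructor
  · rintro h e ⟨a, rfl⟩ ⟨b, rfl⟩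
    obtain ⟨u, v, huv⟩ := Submodule.mem_span_pair.1 h
    exact ⟨u * a + v * b, by rw [← huv, smul_eq_mul, smul_eq_mul]; noncomm_ring⟩
  · intro h
    set e := Submodule.IsPrincipal.generator (Ideal.span {g, F})
    have he : Ideal.span {e} = Ideal.span {g, F} := Ideal.span_singleton_generator _
    have hdvd : ∀ x ∈ ({g, F} : Set A), RDvd e x := fun x hx =>
      rdvd_iff_mem_span_singleton.2 (he ▸ Ideal.subset_span hx)
    rw [← he, ← rdvd_iff_mem_span_singleton]
    exact h e (hdvd g (by simp)) (hdvd F (by simp))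

lemma exists_mul_eq_one_iff_one_mem_span_pair {B : Type*} [Ring B] {π : A →+* B}
    (hπ : Function.Surjective π) {F : A} (hker : RingHom.ker π = Ideal.span {F}) (g : A) :
    (∃ h, h * π g = 1) ↔ (1 : A) ∈ Ideal.span {g, F} := by
  constructor
  · rintro ⟨h, hh⟩
    obtain ⟨h', rfl⟩ := hπ h
    have hmem : h' * g - 1 ∈ Ideal.span {F} := by
      rw [← hker, RingHom.mem_ker, map_sub, map_mul, hh, map_one, sub_self]
    obtain ⟨c, hc⟩ := Ideal.mem_span_singleton'.1 hmem
    exact Submodule.mem_span_pair.2 ⟨h', -c, by rw [smul_eq_mul, smul_eq_mul, neg_mul, hc]; abel⟩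
  · intro h1
    obtain ⟨u, v, huv⟩ := Submodule.mem_span_pair.1 h1
    have hF : π F = 0 := by
      rw [← RingHom.mem_ker, hker]
      exact Ideal.subset_span rfl
    refine ⟨π u, ?_⟩
    simpa [hF] using congrArg π huv

end LeftIdeal

/-- `p^(m - s % m) * p^s` is a power of `p^m = |F_{p^m}|`. -/
lemma inv_pow_pow_sub_mod_pow_pow {p m : ℕ} [Fact p.Prime] (hm : 0 < m) (s : ℕ) (a : Fq p m) :
    ((a ^ p ^ (m - s % m))⁻¹) ^ p ^ s = a⁻¹ := by
  let := Fintype.ofFinite (Fq p m)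
  have hcard : Fintype.card (Fq p m) = p ^ m := by
    rw [← Nat.card_eq_fintype_card, GaloisField.card p m hm.ne']
  have hexp : m - s % m + s = m * (s / m + 1) := by
    have := Nat.div_add_mod s m
    have := Nat.mod_lt s hm
    rw [Nat.mul_succ]
    omega
  rw [inv_pow, ← pow_mul, ← pow_add, hexp, pow_mul, ← hcard, FiniteField.pow_card_pow]

theorem statement5_general (p m s : ℕ) [Fact p.Prime] (hm : 0 < m)
    (theta : Fq p m ≃+* Fq p m)
    (lam0 : Fq p m) (hl0 : lam0 ≠ 0) (hthl : theta lam0 = lam0)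
    {Pf : Type*} [Ring Pf] (iotf : Fq p m →+* Pf) (Xf : Pf)
    (hXiotf : ∀ a, Xf * iotf a = iotf (theta a) * Xf)
    (hPfrep : ∀ g : Pf, ∃! c : ℕ →₀ Fq p m, g = spoly iotf Xf c)
    {Qf : Type*} [Ring Qf] (pif : Pf →+* Qf) (hpif : Function.Surjective pif)
    (hkerf : RingHom.ker pif = Ideal.span {Xf ^ p ^ s - iotf lam0})
    (gP : Pf) :
    (∃ h : Qf, h * pif gP = 1) ↔
      ∀ e : Pf, RDvd e gP →
        RDvd e ((iotf ((lam0 ^ p ^ (m - s % m))⁻¹) * Xf - 1) ^ p ^ s) → RDvd e (1 : Pf) := by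
  have hbij : Function.Bijective (spoly iotf Xf) :=
    (Function.bijective_iff_existsUnique _).2 fun g => by simpa only [eq_comm] using hPfrep g
  have : Nontrivial Pf := hbij.injective.nontrivial
  have : CharP Pf p := charP_of_injective_ringHom iotf.injective p
  have := isPrincipalIdealRing_of_bijective_spoly hbij hXiotf
  have hF : iotf lam0 * (iotf ((lam0 ^ p ^ (m - s % m))⁻¹) * Xf - 1) ^ p ^ s =
      Xf ^ p ^ s - iotf lam0 := by
    rw [map_mul_sub_one_pow_expChar_pow p s hXiotf (by simp [hthl]),
      inv_pow_pow_sub_mod_pow_pow hm, mul_sub, ← mul_assoc, ← map_mul, mul_inv_cancel₀ hl0,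
      map_one, one_mul, mul_one]
  have hker : RingHom.ker pif =
      Ideal.span {(iotf ((lam0 ^ p ^ (m - s % m))⁻¹) * Xf - 1) ^ p ^ s} := by
    rw [hkerf, ← hF, ← smul_eq_mul, Ideal.span,
      Submodule.span_singleton_smul_eq ((isUnit_iff_ne_zero.2 hl0).map iotf)]
  rw [exists_mul_eq_one_iff_one_mem_span_pair hpif hker, one_mem_span_pair_iff]

/-- A nonzero `g(x)` in `F_{p^m}[x,θ]/⟨x^{p^s}-λ₀⟩` is left invertible
iff `gcd_r(g(x), (λ₀₀x-1)^{p^s}) = 1`, i.e. iff every common right divisor of (a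
representative of) `g(x)` and `(λ₀₀x-1)^{p^s}` right-divides `1`. -/
theorem statement5 (p m s : ℕ) [Fact p.Prime] (hm : 0 < m) (hs : 0 < s)
    (theta : Fq p m ≃+* Fq p m)
    (lam0 : Fq p m) (hl0 : lam0 ≠ 0) (hthl : theta lam0 = lam0)
    (hord : thetaOrder p m theta ∣ p ^ s)
    {Pf : Type*} [Ring Pf] (iotf : Fq p m →+* Pf) (Xf : Pf)
    (hXiotf : ∀ a, Xf * iotf a = iotf (theta a) * Xf)
    (hPfrep : ∀ g : Pf, ∃! c : ℕ →₀ Fq p m, g = spoly iotf Xf c)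
    {Qf : Type*} [Ring Qf] (pif : Pf →+* Qf) (hpif : Function.Surjective pif)
    (hkerf : RingHom.ker pif = Ideal.span {Xf ^ p ^ s - iotf lam0})
    (gP : Pf) (hg : pif gP ≠ 0) :
    (∃ h : Qf, h * pif gP = 1) ↔
      ∀ e : Pf, RDvd e gP →
        RDvd e ((iotf ((lam0 ^ p ^ (m - s % m))⁻¹) * Xf - 1) ^ p ^ s) → RDvd e (1 : Pf) :=
  statement5_general p m s hm theta lam0 hl0 hthl iotf Xf hXiotf hPfrep pif hpif hkerf gP

end SkewPaper
end
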